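/- Let X ∈ ℝ^{m×n}, β⁰ ∈ ℝⁿ, ε ∈ ℝ^m, b = Xβ⁰ + ε, p a norm on ℝⁿ, λ > 0, σ ≥ 0, τ ≥ 0, and let β̂ minimize F(β) = ‖Xβ − b‖ + λ p(β) + (σ/2)‖β‖² + (τ/2)‖Xβ − b‖² over ℝⁿ. Set ε̂ = b − Xβ̂. Then both ‖ε̂‖ and λ p(β̂) are bounded above by ‖ε‖ + (τ/2)‖ε‖² + ( λ + σ p_*(β⁰)/2 ) p(β⁰), where p_* is the dual norm of p. -/

import Mathlib

open scoped RealInnerProductSpace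

noncomputable section

/-- A function `p` is a norm on a real vector space. -/
def IsNorm {E : Type*} [AddCommGroup E] [Module ℝ E] (p : E → ℝ) : Prop :=
  (∀ x y, p (x + y) ≤ p x + p y) ∧ (∀ (c : ℝ) (x : E), p (c • x) = |c| * p x) ∧
    (∀ x, p x = 0 ↔ x = 0)

/-- The dual norm `q_*(z) = sup {⟨z, β⟩ : q β ≤ 1}`. -/
def dualNorm {ι : Type*} [Fintype ι] (q : EuclideanSpace ℝ ι → ℝ)
    (z : EuclideanSpace ℝ ι) : ℝ :=
  sSup {r : ℝ | ∃ β : EuclideanSpace ℝ ι, q β ≤ 1 ∧ r = ⟪z, β⟫}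

/-- `β_S`: the vector agreeing with `β` on `S` and zero on the complement. -/
def projS {n : ℕ} (S : Finset (Fin n)) (β : EuclideanSpace ℝ (Fin n)) :
    EuclideanSpace ℝ (Fin n) :=
  WithLp.toLp 2 (fun i => if i ∈ S then β i else 0)

/-- `β_{S̄}`: the vector agreeing with `β` on the complement of `S` and zero on `S`. -/
def projSc {n : ℕ} (S : Finset (Fin n)) (β : EuclideanSpace ℝ (Fin n)) :
    EuclideanSpace ℝ (Fin n) :=
  WithLp.toLp 2 (fun i => if i ∈ S then 0 else β i)

/-- `β^{S̄}`: the restriction of `β` to the complement of `S`. -/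
def restrC {n : ℕ} (S : Finset (Fin n)) (β : EuclideanSpace ℝ (Fin n)) :
    EuclideanSpace ℝ {i : Fin n // i ∉ S} :=
  WithLp.toLp 2 (fun (j : {i : Fin n // i ∉ S}) => β j.1)

/-- Matrix-vector multiplication as a map between Euclidean spaces. -/
def mulVecE {m n : ℕ} (X : Matrix (Fin m) (Fin n) ℝ) (β : EuclideanSpace ℝ (Fin n)) :
    EuclideanSpace ℝ (Fin m) :=
  WithLp.toLp 2 (X.mulVec β)

/-
The objective at `β̂` is at most its value at `β⁰`, which is
`‖ε‖ + λ p(β⁰) + (σ/2)‖β⁰‖² + (τ/2)‖ε‖²`; both `‖ε̂‖` and `λ p(β̂)` are nonnegative summands of the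
objective at `β̂`. It remains to bound `‖β⁰‖² = ⟪β⁰, β⁰⟫ ≤ p_*(β⁰) p(β⁰)`, the Hölder inequality for
`p` and its dual. The supremum defining `p_*` is finite because, in finite dimension, `p` dominates a
multiple of the Euclidean norm (compare on the compact unit sphere).
-/

namespace IsNorm

variable {E : Type*}

section Module

variable [AddCommGroup E] [Module ℝ E] {p : E → ℝ}

theorem map_zero (hp : IsNorm p) : p 0 = 0 := (hp.2.2 0).mpr rfl

theorem map_neg (hp : IsNorm p) (x : E) : p (-x) = p x := by
  simpa using hp.2.1 (-1) x

theorem nonneg (hp : IsNorm p) (x : E) : 0 ≤ p x := by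
  have h := hp.1 x (-x)
  rw [add_neg_cancel, hp.map_zero, hp.map_neg] at h
  linarith

theorem pos (hp : IsNorm p) {x : E} (hx : x ≠ 0) : 0 < p x :=
  (hp.nonneg x).lt_of_ne fun h => hx ((hp.2.2 x).mp h.symm)

theorem map_inv_smul_self (hp : IsNorm p) {x : E} (hx : x ≠ 0) : p ((p x)⁻¹ • x) = 1 := by
  rw [hp.2.1, abs_inv, abs_of_pos (hp.pos hx), inv_mul_cancel₀ (hp.pos hx).ne']

theorem convexOn (hp : IsNorm p) : ConvexOn ℝ Set.univ p := by
  refine ⟨convex_univ, fun x _ y _ a b ha hb _ => ?_⟩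
  calc p (a • x + b • y) ≤ p (a • x) + p (b • y) := hp.1 _ _
    _ = a • p x + b • p y := by rw [hp.2.1, hp.2.1, abs_of_nonneg ha, abs_of_nonneg hb]; rfl

end Module

variable [NormedAddCommGroup E] [NormedSpace ℝ E] [FiniteDimensional ℝ E] {p : E → ℝ}

theorem continuous (hp : IsNorm p) : Continuous p :=
  hp.convexOn.locallyLipschitz.continuous

theorem exists_pos_mul_norm_le (hp : IsNorm p) : ∃ c > 0, ∀ x : E, c * ‖x‖ ≤ p x := by
  rcases subsingleton_or_nontrivial E with hE | hE
  · exact ⟨1, one_pos, fun x => by simp [Subsingleton.elim x 0, hp.map_zero]⟩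
  obtain ⟨z, hz, hz_min⟩ := (isCompact_sphere (0 : E) 1).exists_isMinOn
    (NormedSpace.sphere_nonempty.mpr zero_le_one) hp.continuous.continuousOn
  have hz0 : z ≠ 0 := ne_zero_of_mem_unit_sphere ⟨z, hz⟩
  refine ⟨p z, hp.pos hz0, fun x => ?_⟩
  rcases eq_or_ne x 0 with rfl | hx
  · simp [hp.map_zero]
  have hx' : 0 < ‖x‖ := norm_pos_iff.mpr hx
  have hunit : ‖x‖⁻¹ • x ∈ Metric.sphere (0 : E) 1 := by
    simp [norm_smul, hx'.ne']
  have h : p z ≤ p (‖x‖⁻¹ • x) := hz_min hunit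
  rw [hp.2.1, abs_inv, abs_norm, le_inv_mul_iff₀ hx'] at h
  linarith

end IsNorm

section DualNorm

variable {ι : Type*} [Fintype ι] {p : EuclideanSpace ℝ ι → ℝ}

theorem IsNorm.bddAbove_inner_unitBall (hp : IsNorm p) (z : EuclideanSpace ℝ ι) :
    BddAbove {r : ℝ | ∃ β : EuclideanSpace ℝ ι, p β ≤ 1 ∧ r = ⟪z, β⟫} := by
  obtain ⟨c, hc, hc_le⟩ := hp.exists_pos_mul_norm_le
  refine ⟨‖z‖ * c⁻¹, ?_⟩
  rintro _ ⟨β, hβ, rfl⟩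
  have hβ_norm : ‖β‖ ≤ c⁻¹ := by
    rw [← one_div, le_div_iff₀' hc]
    linarith [hc_le β]
  calc ⟪z, β⟫ ≤ ‖z‖ * ‖β‖ := real_inner_le_norm z β
    _ ≤ ‖z‖ * c⁻¹ := by gcongr

theorem IsNorm.inner_le_dualNorm_mul (hp : IsNorm p) (z β : EuclideanSpace ℝ ι) :
    ⟪z, β⟫ ≤ dualNorm p z * p β := by
  rcases eq_or_ne β 0 with rfl | hβ
  · simp [hp.map_zero]
  have hunit : ⟪z, (p β)⁻¹ • β⟫ ≤ dualNorm p z :=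
    le_csSup (hp.bddAbove_inner_unitBall z) ⟨_, (hp.map_inv_smul_self hβ).le, rfl⟩
  rw [real_inner_smul_right, inv_mul_le_iff₀ (hp.pos hβ)] at hunit
  linarith

theorem IsNorm.norm_sq_le_dualNorm_mul (hp : IsNorm p) (z : EuclideanSpace ℝ ι) :
    ‖z‖ ^ 2 ≤ dualNorm p z * p z := by
  simpa [real_inner_self_eq_norm_sq] using hp.inner_le_dualNorm_mul z z

end DualNorm

/-- upper bounds on `‖ε̂‖` and `λ p(β̂)`. -/
theorem residual_and_penalty_upper_bound {m n : ℕ} (X : Matrix (Fin m) (Fin n) ℝ)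
    (β0 : EuclideanSpace ℝ (Fin n)) (ε : EuclideanSpace ℝ (Fin m))
    (b : EuclideanSpace ℝ (Fin m)) (hb : b = mulVecE X β0 + ε)
    (p : EuclideanSpace ℝ (Fin n) → ℝ) (hp : IsNorm p)
    (lam σ τ : ℝ) (hlam : 0 < lam) (hσ : 0 ≤ σ) (hτ : 0 ≤ τ)
    (βh : EuclideanSpace ℝ (Fin n))
    (hmin : ∀ β : EuclideanSpace ℝ (Fin n),
      ‖mulVecE X βh - b‖ + lam * p βh + σ / 2 * ‖βh‖ ^ 2 +
          τ / 2 * ‖mulVecE X βh - b‖ ^ 2 ≤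
        ‖mulVecE X β - b‖ + lam * p β + σ / 2 * ‖β‖ ^ 2 +
          τ / 2 * ‖mulVecE X β - b‖ ^ 2)
    (εh : EuclideanSpace ℝ (Fin m)) (hεh : εh = b - mulVecE X βh) :
    ‖εh‖ ≤ ‖ε‖ + τ / 2 * ‖ε‖ ^ 2 + (lam + σ * dualNorm p β0 / 2) * p β0 ∧
      lam * p βh ≤ ‖ε‖ + τ / 2 * ‖ε‖ ^ 2 + (lam + σ * dualNorm p β0 / 2) * p β0 := by
  have h_truth : mulVecE X β0 - b = -ε := by rw [hb]; abel
  have h_compare := hmin β0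
  rw [h_truth, norm_neg] at h_compare
  have h_ridge : σ / 2 * ‖β0‖ ^ 2 ≤ σ / 2 * (dualNorm p β0 * p β0) := by
    gcongr
    exact hp.norm_sq_le_dualNorm_mul β0
  have h_penalty : 0 ≤ lam * p βh := mul_nonneg hlam.le (hp.nonneg βh)
  have h_residual : 0 ≤ ‖mulVecE X βh - b‖ := norm_nonneg _
  have h_quadratic : 0 ≤ σ / 2 * ‖βh‖ ^ 2 + τ / 2 * ‖mulVecE X βh - b‖ ^ 2 := by positivity
  rw [hεh, norm_sub_rev]
  constructor <;> linarith
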